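/- arXiv:2302.06935 — 2 statements merged into one kernel-verified Lean document; each statement's English description precedes it below -/
import Mathlib

section
/- Fix an integer k ≥ 1, data a₁,…,a_k ∈ (0,∞), z₁,…,z_k ∈ {0,1}, and fix β > 0. Let |z| = Σ_{i=1}^{k} z_i. Then as α → 0, ℓ_k(z|a,(α,β)) = O( |log α|^{|z|-k} · exp( -(1/(2β²)) Σ_{i=1}^{k} (1-z_i)(log a_i - log α)² ) ). -/
open MeasureTheory Real Filter Set

/-- The standard Gaussian cumulative distribution function. -/
noncomputable def Phi (x : ℝ) : ℝ :=
  (Real.sqrt (2 * Real.pi))⁻¹ * ∫ t in Set.Iic x, Real.exp (-t ^ 2 / 2)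

/-- The likelihood of the log-normal (probit) fragility model. -/
noncomputable def lik (k : ℕ) (a : Fin k → ℝ) (z : Fin k → ℕ) (α β : ℝ) : ℝ :=
  ∏ i, Phi (Real.log (a i / α) / β) ^ (z i) *
    (1 - Phi (Real.log (a i / α) / β)) ^ (1 - z i)

/-!
For small `α` every `log (aᵢ / α)` exceeds `|log α| / 2`. A factor of the likelihood with
`zᵢ = 1` is at most `1`; one with `zᵢ = 0` is the Gaussian tail `1 - Φ(x)` at
`x = log (aᵢ / α) / β`, and Mills' inequality `1 - Φ(x) ≤ φ(x) / x` bounds it by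
`β |log α|⁻¹ exp (-(log aᵢ - log α)² / (2β²))`. Multiplying the `k` factor bounds gives the claim.
-/

lemma integrable_exp_neg_sq_div_two : Integrable fun t : ℝ => exp (-t ^ 2 / 2) := by
  simpa [neg_div, div_eq_inv_mul] using integrable_exp_neg_mul_sq (b := 1 / 2) (by norm_num)

lemma integral_exp_neg_sq_div_two : ∫ t : ℝ, exp (-t ^ 2 / 2) = √(2 * π) := by
  simpa [neg_div, div_eq_inv_mul, mul_comm] using integral_gaussian (1 / 2)

lemma two_le_sqrt_two_mul_pi : 2 ≤ √(2 * π) :=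
  (le_sqrt zero_le_two (by positivity)).mpr (by nlinarith [pi_gt_three])

lemma Phi_nonneg (x : ℝ) : 0 ≤ Phi x :=
  mul_nonneg (by positivity) (setIntegral_nonneg measurableSet_Iic fun _ _ => (exp_pos _).le)

lemma one_sub_Phi_eq (x : ℝ) :
    1 - Phi x = (√(2 * π))⁻¹ * ∫ t in Ioi x, exp (-t ^ 2 / 2) := by
  have hsplit := intervalIntegral.integral_Iic_add_Ioi (b := x)
    integrable_exp_neg_sq_div_two.integrableOn integrable_exp_neg_sq_div_two.integrableOn
  rw [integral_exp_neg_sq_div_two] at hsplit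
  have hsqrt : (√(2 * π))⁻¹ * √(2 * π) = 1 := inv_mul_cancel₀ (by positivity)
  rw [Phi, ← hsqrt, ← hsplit]
  ring

lemma Phi_le_one (x : ℝ) : Phi x ≤ 1 := by
  have htail : 0 ≤ (√(2 * π))⁻¹ * ∫ t in Ioi x, exp (-t ^ 2 / 2) :=
    mul_nonneg (by positivity) (setIntegral_nonneg measurableSet_Ioi fun _ _ => (exp_pos _).le)
  linarith [one_sub_Phi_eq x]

/-- Mills' ratio inequality for the Gaussian tail. -/
lemma one_sub_Phi_le {x : ℝ} (hx : 0 < x) : 1 - Phi x ≤ exp (-x ^ 2 / 2) / (√(2 * π) * x) := by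
  -- `-t² / 2 ≤ x² / 2 - x t`, i.e. `(t - x)² ≥ 0`, reduces the tail to an exponential integral.
  have htail : ∫ t in Ioi x, exp (-t ^ 2 / 2) ≤ ∫ t in Ioi x, exp (x ^ 2 / 2) * exp (-x * t) :=
    setIntegral_mono_on integrable_exp_neg_sq_div_two.integrableOn
      ((exp_neg_integrableOn_Ioi x hx).const_mul _) measurableSet_Ioi fun t _ => by
        rw [← exp_add]
        exact exp_le_exp.mpr (by nlinarith [sq_nonneg (t - x)])
  have hexp : ∫ t in Ioi x, exp (x ^ 2 / 2) * exp (-x * t) = exp (-x ^ 2 / 2) / x := by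
    rw [integral_const_mul, integral_exp_mul_Ioi (neg_lt_zero.mpr hx), neg_div_neg_eq,
      ← mul_div_assoc, ← exp_add]
    ring_nf
  rw [one_sub_Phi_eq, mul_comm (√(2 * π)), ← div_div, ← hexp, div_eq_inv_mul]
  gcongr

lemma one_sub_Phi_div_le {β L d : ℝ} (hβ : 0 < β) (hL : 0 < L) (hd : L / 2 ≤ d) :
    1 - Phi (d / β) ≤ β * (L⁻¹ * exp (-d ^ 2 / (2 * β ^ 2))) := by
  have hd0 : 0 < d := by linarith
  calc 1 - Phi (d / β) ≤ exp (-(d / β) ^ 2 / 2) / (√(2 * π) * (d / β)) :=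
        one_sub_Phi_le (div_pos hd0 hβ)
    _ = β / (√(2 * π) * d) * exp (-d ^ 2 / (2 * β ^ 2)) := by
        field_simp
    _ ≤ β / (2 * (L / 2)) * exp (-d ^ 2 / (2 * β ^ 2)) := by
        gcongr
        exact two_le_sqrt_two_mul_pi
    _ = β * (L⁻¹ * exp (-d ^ 2 / (2 * β ^ 2))) := by
        field_simp

lemma Phi_pow_mul_one_sub_Phi_pow_le {β L d : ℝ} {z : ℕ} (hz : z = 0 ∨ z = 1) (hβ : 0 < β)
    (hL : 0 < L) (hd : L / 2 ≤ d) :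
    Phi (d / β) ^ z * (1 - Phi (d / β)) ^ (1 - z) ≤
      (1 + β) * (L ^ ((z : ℤ) - 1) * exp (-((1 - (z : ℝ)) * d ^ 2) / (2 * β ^ 2))) := by
  rcases hz with rfl | rfl
  · simp only [pow_zero, one_mul, Nat.cast_zero, zero_sub, zpow_neg_one, sub_zero, Nat.sub_zero,
      pow_one]
    calc 1 - Phi (d / β) ≤ β * (L⁻¹ * exp (-d ^ 2 / (2 * β ^ 2))) := one_sub_Phi_div_le hβ hL hd
      _ ≤ (1 + β) * (L⁻¹ * exp (-d ^ 2 / (2 * β ^ 2))) := by gcongr; linarith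
  · simp only [pow_one, Nat.sub_self, pow_zero, mul_one, Nat.cast_one, sub_self, zpow_zero,
      zero_mul, neg_zero, zero_div, exp_zero]
    linarith [Phi_le_one (d / β)]

lemma zpow_sum₀ {ι G₀ : Type*} [CommGroupWithZero G₀] {x : G₀} (hx : x ≠ 0) (s : Finset ι)
    (e : ι → ℤ) :
    x ^ (∑ i ∈ s, e i) = ∏ i ∈ s, x ^ e i := by
  induction s using Finset.cons_induction with
  | empty => simp
  | cons i s hi ih => rw [Finset.sum_cons, Finset.prod_cons, zpow_add₀ hx, ih]

lemma prod_const_mul_zpow_mul_exp {ι : Type*} (s : Finset ι) (C : ℝ) {L : ℝ} (hL : L ≠ 0)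
    (e : ι → ℤ) (f : ι → ℝ) :
    ∏ i ∈ s, C * (L ^ e i * exp (f i)) = C ^ s.card * L ^ (∑ i ∈ s, e i) * exp (∑ i ∈ s, f i) := by
  rw [Finset.prod_mul_distrib, Finset.prod_mul_distrib, Finset.prod_const, zpow_sum₀ hL, exp_sum,
    mul_assoc]

theorem stmt4_general (k : ℕ) (a : Fin k → ℝ) (ha : ∀ i, 0 < a i)
    (z : Fin k → ℕ) (hz : ∀ i, z i = 0 ∨ z i = 1) (β : ℝ) (hβ : 0 < β) :
    ∃ C > (0 : ℝ), ∃ α₀ > (0 : ℝ), ∀ α : ℝ, 0 < α → α < α₀ →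
      lik k a z α β ≤ C * |Real.log α| ^ ((∑ i, (z i : ℤ)) - (k : ℤ)) *
        Real.exp (-(∑ i, (1 - (z i : ℝ)) * (Real.log (a i) - Real.log α) ^ 2) /
          (2 * β ^ 2)) := by
  set M := ∑ i, |log (a i)|
  refine ⟨(1 + β) ^ k, by positivity, exp (-(2 * M)), exp_pos _, fun α hα hαα₀ => ?_⟩
  have hM : 2 * M < -log α := by linarith [(log_lt_log hα hαα₀).trans_eq (log_exp _)]
  have hL : |log α| = -log α := abs_of_neg (by linarith [show 0 ≤ M by positivity])
  have hLpos : 0 < |log α| := by rw [hL]; linarith [show 0 ≤ M by positivity]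
  have hd : ∀ i, |log α| / 2 ≤ log (a i) - log α := fun i => by
    have : |log (a i)| ≤ M :=
      Finset.single_le_sum (fun j _ => abs_nonneg (log (a j))) (Finset.mem_univ i)
    linarith [neg_abs_le (log (a i))]
  calc lik k a z α β = ∏ i, Phi ((log (a i) - log α) / β) ^ z i *
        (1 - Phi ((log (a i) - log α) / β)) ^ (1 - z i) :=
        Finset.prod_congr rfl fun i _ => by rw [log_div (ha i).ne' hα.ne']
    _ ≤ ∏ i, (1 + β) * (|log α| ^ ((z i : ℤ) - 1) *
          exp (-((1 - (z i : ℝ)) * (log (a i) - log α) ^ 2) / (2 * β ^ 2))) :=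
        Finset.prod_le_prod (fun i _ => mul_nonneg (pow_nonneg (Phi_nonneg _) _)
            (pow_nonneg (sub_nonneg.mpr (Phi_le_one _)) _))
          fun i _ => Phi_pow_mul_one_sub_Phi_pow_le (hz i) hβ hLpos (hd i)
    _ = _ := by
        rw [prod_const_mul_zpow_mul_exp _ _ hLpos.ne', Finset.sum_sub_distrib,
          ← Finset.sum_div, Finset.sum_neg_distrib]
        simp

/-- Fix `k ≥ 1`, data `aᵢ ∈ (0,∞)`, `zᵢ ∈ {0,1}` and `β > 0`. With `|z| = Σ zᵢ`, as
`α → 0` one has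
`ℓ_k(z|a,(α,β)) = O(|log α|^{|z|-k} exp(-(1/(2β²)) Σ (1-zᵢ)(log aᵢ - log α)²))`. -/
theorem stmt4 (k : ℕ) (hk : 1 ≤ k) (a : Fin k → ℝ) (ha : ∀ i, 0 < a i)
    (z : Fin k → ℕ) (hz : ∀ i, z i = 0 ∨ z i = 1) (β : ℝ) (hβ : 0 < β) :
    ∃ C > (0 : ℝ), ∃ α₀ > (0 : ℝ), ∀ α : ℝ, 0 < α → α < α₀ →
      lik k a z α β ≤ C * |Real.log α| ^ ((∑ i, (z i : ℤ)) - (k : ℤ)) *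
        Real.exp (-(∑ i, (1 - (z i : ℝ)) * (Real.log (a i) - Real.log α) ^ 2) /
          (2 * β ^ 2)) :=
  stmt4_general k a ha z hz β hβ
end

section
/- Assume the intensity measure density is log-normal: p(a) = (√(2πσ²)·a)^{-1}·exp(-(log a - μ)²/(2σ²)) on (0,∞), with parameters μ ∈ ℝ, σ > 0. Let J(θ) be the Jeffreys prior of the log-normal (probit) fragility model, J(θ)² = |A_{01,02}·A_{21,22} − A_{11,12}²| / (α²β⁶), where for k = 0,1,2, A_{k1,k2}(α,β) = ∫_0^∞ log^k(a/α)·Φ'(γ(a))²/[Φ(γ(a))(1-Φ(γ(a)))]·p(a) da, γ(a) = (log a - log α)/β, Φ'(x) = (2π)^{-1/2}exp(-x²/2). Then for each fixed α > 0 there exists a constant D'(α) > 0 such that J((α,β)) ~ D'(α)/β as β → 0. -/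
open MeasureTheory Real Filter Set

/-- The standard Gaussian density `Φ'(x) = (2π)^{-1/2} exp(-x²/2)`. -/
noncomputable def Phi' (x : ℝ) : ℝ :=
  (Real.sqrt (2 * Real.pi))⁻¹ * Real.exp (-x ^ 2 / 2)

/-- The log-normal intensity measure density
`p(a) = (√(2πσ²)·a)⁻¹ exp(-(log a - μ)²/(2σ²))`. -/
noncomputable def pLN (μ σ a : ℝ) : ℝ :=
  (Real.sqrt (2 * Real.pi * σ ^ 2) * a)⁻¹ * Real.exp (-(Real.log a - μ) ^ 2 / (2 * σ ^ 2))

/-- `A_{k1,k2}(α,β) = ∫₀^∞ log^k(a/α)·Φ'(γ(a))²/[Φ(γ(a))(1-Φ(γ(a)))]·p(a) da`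
with `γ(a) = (log a - log α)/β`. -/
noncomputable def A (μ σ : ℝ) (k : ℕ) (α β : ℝ) : ℝ :=
  ∫ a in Set.Ioi (0 : ℝ),
    Real.log (a / α) ^ k *
      (Phi' ((Real.log a - Real.log α) / β) ^ 2 /
        (Phi ((Real.log a - Real.log α) / β) *
          (1 - Phi ((Real.log a - Real.log α) / β)))) * pLN μ σ a

/-- The Jeffreys prior, `J(θ) = √(|A₀₁,₀₂·A₂₁,₂₂ − A₁₁,₁₂²| / (α²β⁶))`. -/
noncomputable def Jeff (μ σ α β : ℝ) : ℝ :=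
  Real.sqrt (|A μ σ 0 α β * A μ σ 2 α β - A μ σ 1 α β ^ 2| / (α ^ 2 * β ^ 6))

/-!
After the substitution `a = α exp (β x)`, each `A_k(α, β)` becomes `β^(k+1)` times
`∫ x^k w(x) q(β x) dx`, where `w = Φ'² / (Φ (1 - Φ))` is the probit Fisher weight and `q` is the
Gaussian density of `log a` shifted by `log α`. The weight `w` is even and has Gaussian tails, so
by dominated convergence these integrals tend to `q(0) ∫ x^k w` as `β → 0`; the limit vanishes for
`k = 1` and is positive for `k = 0, 2`. Hence `β · J(α, β) → q(0) √(∫ w ∫ x² w) / α`.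
-/

open scoped NNReal Topology
open ProbabilityTheory

theorem integral_Ioi_inv_smul_comp_log {E : Type*} [NormedAddCommGroup E] [NormedSpace ℝ E]
    (g : ℝ → E) : ∫ a in Ioi 0, a⁻¹ • g (log a) = ∫ t, g t := by
  have h := integral_image_eq_integral_abs_deriv_smul MeasurableSet.univ
    (fun x _ => (hasDerivAt_exp x).hasDerivWithinAt) exp_injective.injOn
    fun a => a⁻¹ • g (log a)
  rw [image_univ, range_exp, setIntegral_univ] at h
  rw [h]
  congr 1 with t
  rw [abs_of_pos (exp_pos t), log_exp, smul_smul, mul_inv_cancel₀ (exp_ne_zero t), one_smul]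

theorem tendsto_integral_mul_comp_mul_nhds_zero {g q : ℝ → ℝ} (hg : Integrable g)
    (hq : Continuous q) {M : ℝ} (hM : ∀ t, |q t| ≤ M) :
    Tendsto (fun β => ∫ x, g x * q (β * x)) (𝓝 0) (𝓝 (∫ x, g x * q 0)) := by
  refine tendsto_integral_filter_of_dominated_convergence (fun x => ‖g x‖ * M)
    (Eventually.of_forall fun β => hg.aestronglyMeasurable.mul
      (hq.comp (continuous_const_mul β)).aestronglyMeasurable)
    (Eventually.of_forall fun β => ae_of_all _ fun x => ?_) (hg.norm.mul_const M)
    (ae_of_all _ fun x => ?_)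
  · rw [norm_mul]
    exact mul_le_mul_of_nonneg_left (hM _) (norm_nonneg _)
  · exact ((hq.comp (continuous_mul_const x)).tendsto' 0 (q 0) (by simp)).const_mul (g x)

lemma continuous_gaussianPDFReal (μ : ℝ) (v : ℝ≥0) : Continuous (gaussianPDFReal μ v) := by
  unfold gaussianPDFReal
  fun_prop

lemma gaussianPDFReal_le (μ : ℝ) (v : ℝ≥0) (x : ℝ) :
    gaussianPDFReal μ v x ≤ (√(2 * π * v))⁻¹ := by
  refine mul_le_of_le_one_right (by positivity) (exp_le_one_iff.2 ?_)
  exact div_nonpos_of_nonpos_of_nonneg (neg_nonpos.2 (sq_nonneg _)) (by positivity)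

lemma Phi'_eq_gaussianPDFReal : Phi' = gaussianPDFReal 0 1 := by
  ext x
  simp [Phi', gaussianPDFReal]

lemma Phi'_pos (x : ℝ) : 0 < Phi' x := by
  unfold Phi'
  positivity

lemma Phi'_neg (x : ℝ) : Phi' (-x) = Phi' x := by
  simp only [Phi', neg_sq]

lemma continuous_Phi' : Continuous Phi' := by
  unfold Phi'
  fun_prop

lemma integrable_Phi' : Integrable Phi' :=
  Phi'_eq_gaussianPDFReal ▸ integrable_gaussianPDFReal 0 1

lemma Phi_eq_setIntegral (x : ℝ) : Phi x = ∫ t in Iic x, Phi' t := by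
  simp only [Phi, Phi', integral_const_mul]

lemma one_sub_Phi (x : ℝ) : 1 - Phi x = ∫ t in Ioi x, Phi' t := by
  have htotal : ∫ t, Phi' t = 1 := by
    rw [Phi'_eq_gaussianPDFReal, integral_gaussianPDFReal_eq_one 0 one_ne_zero]
  rw [Phi_eq_setIntegral, ← htotal,
    ← intervalIntegral.integral_Iic_add_Ioi integrable_Phi'.integrableOn integrable_Phi'.integrableOn]
  ring

lemma setIntegral_Phi'_pos {s : Set ℝ} (hs : volume s ≠ 0) : 0 < ∫ t in s, Phi' t := by
  rw [setIntegral_pos_iff_support_of_nonneg_ae (ae_of_all _ fun t => (Phi'_pos t).le)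
    integrable_Phi'.integrableOn, Function.support_eq_univ fun t => (Phi'_pos t).ne', univ_inter]
  exact pos_iff_ne_zero.2 hs

lemma Phi_pos (x : ℝ) : 0 < Phi x := by
  rw [Phi_eq_setIntegral]
  exact setIntegral_Phi'_pos (by simp)

lemma Phi_lt_one (x : ℝ) : Phi x < 1 := by
  have h := one_sub_Phi x ▸ setIntegral_Phi'_pos (s := Ioi x) (by simp)
  linarith

lemma monotone_Phi : Monotone Phi := fun x y hxy => by
  simp only [Phi_eq_setIntegral]
  exact setIntegral_mono_set integrable_Phi'.integrableOn
    (ae_of_all _ fun t => (Phi'_pos t).le) (Iic_subset_Iic.2 hxy).eventuallyLE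

lemma Phi_neg (x : ℝ) : Phi (-x) = 1 - Phi x := by
  rw [Phi_eq_setIntegral, one_sub_Phi, ← integral_comp_neg_Ioi]
  simp only [Phi'_neg]

lemma one_half_le_Phi {x : ℝ} (hx : 0 ≤ x) : 1 / 2 ≤ Phi x := by
  have h := Phi_neg 0
  rw [neg_zero] at h
  linarith [monotone_Phi hx]

lemma Phi'_add_one_le_one_sub_Phi {x : ℝ} (hx : 0 ≤ x) : Phi' (x + 1) ≤ 1 - Phi x := by
  have hvol : volume (Ioc x (x + 1)) = 1 := by simp
  have hlow : ∀ t ∈ Ioc x (x + 1), Phi' (x + 1) ≤ Phi' t := fun t ht => by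
    unfold Phi'
    gcongr
    · linarith [ht.1]
    · exact ht.2
  calc Phi' (x + 1)
      ≤ ∫ t in Ioc x (x + 1), Phi' t := by
        simpa [hvol] using setIntegral_ge_of_const_le_real measurableSet_Ioc (by simp [hvol])
          hlow integrable_Phi'.integrableOn
    _ ≤ ∫ t in Ioi x, Phi' t := setIntegral_mono_set integrable_Phi'.integrableOn
        (ae_of_all _ fun t => (Phi'_pos t).le) Ioc_subset_Ioi_self.eventuallyLE
    _ = 1 - Phi x := (one_sub_Phi x).symm

noncomputable def probitWeight (x : ℝ) : ℝ :=
  Phi' x ^ 2 / (Phi x * (1 - Phi x))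

lemma probitWeight_pos (x : ℝ) : 0 < probitWeight x :=
  div_pos (pow_pos (Phi'_pos x) 2) (mul_pos (Phi_pos x) (sub_pos.2 (Phi_lt_one x)))

lemma probitWeight_neg (x : ℝ) : probitWeight (-x) = probitWeight x := by
  rw [probitWeight, probitWeight, Phi'_neg, Phi_neg, sub_sub_cancel, mul_comm]

lemma measurable_probitWeight : Measurable probitWeight :=
  (continuous_Phi'.measurable.pow_const 2).div
    (monotone_Phi.measurable.mul (measurable_const.sub monotone_Phi.measurable))

lemma probitWeight_le_of_nonneg {x : ℝ} (hx : 0 ≤ x) :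
    probitWeight x ≤ Phi' x ^ 2 / (Phi' (x + 1) / 2) := by
  have hden : Phi' (x + 1) / 2 ≤ Phi x * (1 - Phi x) := by
    nlinarith [one_half_le_Phi hx, Phi'_add_one_le_one_sub_Phi hx, Phi'_pos (x + 1)]
  exact div_le_div_of_nonneg_left (sq_nonneg _) (half_pos (Phi'_pos _)) hden

lemma Phi'_sq_eq_mul_Phi'_add_one (x : ℝ) :
    Phi' x ^ 2 = (√(2 * π))⁻¹ * exp (-x ^ 2 / 2 + x + 1 / 2) * Phi' (x + 1) := by
  have hexp : exp (-x ^ 2 / 2) ^ 2 = exp (-x ^ 2 / 2 + x + 1 / 2) * exp (-(x + 1) ^ 2 / 2) := by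
    rw [← exp_add, sq, ← exp_add]
    ring_nf
  simp only [Phi', mul_pow, hexp]
  ring

lemma probitWeight_le (x : ℝ) :
    probitWeight x ≤ 2 * exp (3 / 2) * exp (-4⁻¹ * x ^ 2) := by
  wlog hx : 0 ≤ x generalizing x
  · simpa only [probitWeight_neg, neg_sq] using this (-x) (by linarith)
  have hc : (√(2 * π))⁻¹ ≤ 1 :=
    inv_le_one_of_one_le₀ (Real.one_le_sqrt.2 (by nlinarith [pi_gt_three]))
  have hexp : exp (-x ^ 2 / 2 + x + 1 / 2) ≤ exp (3 / 2) * exp (-4⁻¹ * x ^ 2) := by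
    rw [← exp_add]
    exact exp_le_exp.2 (by nlinarith [sq_nonneg (x / 2 - 1)])
  calc probitWeight x ≤ Phi' x ^ 2 / (Phi' (x + 1) / 2) := probitWeight_le_of_nonneg hx
    _ = 2 * (√(2 * π))⁻¹ * exp (-x ^ 2 / 2 + x + 1 / 2) := by
      rw [Phi'_sq_eq_mul_Phi'_add_one]
      field_simp [(Phi'_pos (x + 1)).ne']
    _ ≤ 2 * 1 * (exp (3 / 2) * exp (-4⁻¹ * x ^ 2)) := by gcongr
    _ = 2 * exp (3 / 2) * exp (-4⁻¹ * x ^ 2) := by ring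

lemma integrable_pow_mul_probitWeight (k : ℕ) :
    Integrable fun x => x ^ k * probitWeight x := by
  have hgauss : Integrable fun x : ℝ => x ^ k * exp (-4⁻¹ * x ^ 2) := by
    simpa only [rpow_natCast] using
      integrable_rpow_mul_exp_neg_mul_sq (b := 4⁻¹) (by norm_num) (s := k)
        (by linarith [k.cast_nonneg (α := ℝ)])
  refine (hgauss.norm.const_mul (2 * exp (3 / 2))).mono'
    ((measurable_id.pow_const k).mul measurable_probitWeight).aestronglyMeasurable
    (ae_of_all _ fun x => ?_)
  rw [norm_mul, norm_mul, Real.norm_of_nonneg (probitWeight_pos x).le,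
    Real.norm_of_nonneg (exp_pos _).le]
  calc ‖x ^ k‖ * probitWeight x ≤ ‖x ^ k‖ * (2 * exp (3 / 2) * exp (-4⁻¹ * x ^ 2)) :=
        mul_le_mul_of_nonneg_left (probitWeight_le x) (norm_nonneg _)
    _ = 2 * exp (3 / 2) * (‖x ^ k‖ * exp (-4⁻¹ * x ^ 2)) := by ring

lemma integral_pow_mul_probitWeight_pos {k : ℕ} (hk : Even k) :
    0 < ∫ x, x ^ k * probitWeight x := by
  rw [integral_pos_iff_support_of_nonneg
    (fun x => mul_nonneg (hk.pow_nonneg x) (probitWeight_pos x).le)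
    (integrable_pow_mul_probitWeight k)]
  refine (measure_mono (s := Ioi 0) fun x hx => ?_).trans_lt' (by simp)
  exact (mul_pos (pow_pos hx k) (probitWeight_pos x)).ne'

lemma integral_probitWeight_mul_integral_sq_mul_probitWeight_pos :
    0 < (∫ x, probitWeight x) * ∫ x, x ^ 2 * probitWeight x := by
  have h0 := integral_pow_mul_probitWeight_pos (k := 0) Even.zero
  simp only [pow_zero, one_mul] at h0
  exact mul_pos h0 (integral_pow_mul_probitWeight_pos even_two)

lemma integral_pow_mul_probitWeight_eq_zero {k : ℕ} (hk : Odd k) :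
    ∫ x, x ^ k * probitWeight x = 0 := by
  have h := integral_neg_eq_self (fun x => x ^ k * probitWeight x) volume
  simp only [hk.neg_pow, probitWeight_neg, neg_mul, integral_neg] at h
  linarith

lemma pLN_eq (μ σ a : ℝ) :
    pLN μ σ a = a⁻¹ * gaussianPDFReal μ (σ ^ 2).toNNReal (log a) := by
  rw [pLN, gaussianPDFReal, Real.coe_toNNReal _ (sq_nonneg σ), mul_inv]
  ring

noncomputable def scaledMoment (μ σ α : ℝ) (k : ℕ) (β : ℝ) : ℝ :=
  ∫ x, x ^ k * probitWeight x * gaussianPDFReal μ (σ ^ 2).toNNReal (log α + β * x)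

lemma A_eq_pow_mul_scaledMoment (μ σ : ℝ) (k : ℕ) {α β : ℝ} (hα : 0 < α) (hβ : 0 < β) :
    A μ σ k α β = β ^ (k + 1) * scaledMoment μ σ α k β := by
  set n := gaussianPDFReal μ (σ ^ 2).toNNReal
  have hlog : A μ σ k α β = ∫ t, (t - log α) ^ k * probitWeight ((t - log α) / β) * n t := by
    rw [A, ← integral_Ioi_inv_smul_comp_log]
    refine setIntegral_congr_fun measurableSet_Ioi fun a ha => ?_
    rw [smul_eq_mul, pLN_eq, log_div (ne_of_gt ha) hα.ne', probitWeight]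
    ring
  calc A μ σ k α β
      = ∫ s, β ^ k * ((s / β) ^ k * probitWeight (s / β) * n (log α + β * (s / β))) := by
        rw [hlog, ← integral_add_left_eq_self _ (log α)]
        congr 1 with s
        rw [add_sub_cancel_left, mul_div_cancel₀ _ hβ.ne', div_pow]
        field_simp
    _ = |β| • ∫ x, β ^ k * (x ^ k * probitWeight x * n (log α + β * x)) :=
        Measure.integral_comp_div (fun x => β ^ k * (x ^ k * probitWeight x * n (log α + β * x))) β
    _ = β ^ (k + 1) * scaledMoment μ σ α k β := by
        rw [integral_const_mul, abs_of_pos hβ, smul_eq_mul, scaledMoment]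
        ring

lemma tendsto_scaledMoment (μ σ α : ℝ) (k : ℕ) :
    Tendsto (scaledMoment μ σ α k) (𝓝 0) (𝓝 ((∫ x, x ^ k * probitWeight x) *
      gaussianPDFReal μ (σ ^ 2).toNNReal (log α))) := by
  have h := tendsto_integral_mul_comp_mul_nhds_zero (integrable_pow_mul_probitWeight k)
    (q := fun t => gaussianPDFReal μ (σ ^ 2).toNNReal (log α + t))
    ((continuous_gaussianPDFReal _ _).comp (continuous_const_add (log α)))
    fun t => (abs_of_nonneg (gaussianPDFReal_nonneg _ _ _)).trans_le (gaussianPDFReal_le _ _ _)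
  unfold scaledMoment
  simpa only [mul_zero, add_zero, integral_mul_const] using h

lemma Jeff_eq (μ σ : ℝ) {α β : ℝ} (hα : 0 < α) (hβ : 0 < β) :
    Jeff μ σ α β = √|scaledMoment μ σ α 0 β * scaledMoment μ σ α 2 β -
      scaledMoment μ σ α 1 β ^ 2| / (α * β) := by
  simp only [Jeff, A_eq_pow_mul_scaledMoment μ σ _ hα hβ]
  set X := scaledMoment μ σ α 0 β * scaledMoment μ σ α 2 β - scaledMoment μ σ α 1 β ^ 2
  have hβ4 : β ^ (0 + 1) * scaledMoment μ σ α 0 β * (β ^ (2 + 1) * scaledMoment μ σ α 2 β) -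
      (β ^ (1 + 1) * scaledMoment μ σ α 1 β) ^ 2 = β ^ 4 * X := by ring
  have hscale : |β ^ 4 * X| / (α ^ 2 * β ^ 6) = |X| / (α * β) ^ 2 := by
    rw [abs_mul, abs_of_pos (by positivity)]
    field_simp
  rw [hβ4, hscale, sqrt_div (abs_nonneg _), sqrt_sq (by positivity)]

lemma tendsto_sqrt_abs_det_scaledMoment (μ σ α : ℝ) :
    Tendsto (fun β => √|scaledMoment μ σ α 0 β * scaledMoment μ σ α 2 β -
      scaledMoment μ σ α 1 β ^ 2|) (𝓝 0) (𝓝 (√((∫ x, probitWeight x) *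
        ∫ x, x ^ 2 * probitWeight x) * gaussianPDFReal μ (σ ^ 2).toNNReal (log α))) := by
  have h := (((tendsto_scaledMoment μ σ α 0).mul (tendsto_scaledMoment μ σ α 2)).sub
    ((tendsto_scaledMoment μ σ α 1).pow 2)).abs.sqrt
  convert h using 2
  have hpos := integral_probitWeight_mul_integral_sq_mul_probitWeight_pos.le
  simp only [pow_zero, one_mul]
  rw [integral_pow_mul_probitWeight_eq_zero odd_one, zero_mul, zero_pow two_ne_zero, sub_zero,
    mul_mul_mul_comm, abs_of_nonneg (mul_nonneg hpos (mul_self_nonneg _)), sqrt_mul hpos,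
    sqrt_mul_self (gaussianPDFReal_nonneg _ _ _)]

/-- For the log-normal IM density and each fixed `α > 0`, there is `D'(α) > 0` such
that `J((α,β)) ~ D'(α)/β` as `β → 0⁺`. -/
theorem stmt9 (μ σ : ℝ) (hσ : 0 < σ) (α : ℝ) (hα : 0 < α) :
    ∃ D' > (0 : ℝ), Filter.Tendsto (fun β : ℝ => Jeff μ σ α β / (D' / β))
      (nhdsWithin 0 (Set.Ioi 0)) (nhds 1) := by
  set L := √((∫ x, probitWeight x) * ∫ x, x ^ 2 * probitWeight x) *
    gaussianPDFReal μ (σ ^ 2).toNNReal (log α)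
  have hL : 0 < L := mul_pos (sqrt_pos.2 integral_probitWeight_mul_integral_sq_mul_probitWeight_pos)
    (gaussianPDFReal_pos _ _ _ (Real.toNNReal_pos.2 (by positivity)).ne')
  refine ⟨L / α, div_pos hL hα, ?_⟩
  have h := ((tendsto_sqrt_abs_det_scaledMoment μ σ α).mono_left
    (nhdsWithin_le_nhds (s := Ioi 0))).div_const L
  rw [div_self hL.ne'] at h
  refine h.congr' (eventually_nhdsWithin_of_forall fun β (hβ : 0 < β) => ?_)
  dsimp only
  rw [Jeff_eq μ σ hα hβ]
  field_simp
end
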